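/- arXiv:1202.4525 — 4 statements merged into one kernel-verified Lean document; each statement's English description precedes it below -/
import Mathlib

section
/- The Welch bound: for any M×N matrix F = (f_1,...,f_N) with N ≥ M ≥ 1 whose columns are unit vectors in C^M, the worst-case coherence max_{n≠n'} |⟨f_n, f_{n'}⟩| is at least sqrt((N-M)/(M(N-1))). -/
/-!
Let `F` be the `M × N` matrix of coordinates of the `f n` in an orthonormal basis. The sum of
`‖⟪f n, f n'⟫‖²` over all pairs is the squared Frobenius norm of the Gram matrix `FᴴF`, which
equals that of the `M × M` frame operator `FFᴴ` since `tr (FᴴF FᴴF) = tr (FFᴴ FFᴴ)`.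
Cauchy–Schwarz on the diagonal of `FFᴴ` bounds it below by `(tr FFᴴ)² / M = N² / M`. The diagonal
pairs contribute `N`, and each of the `N(N-1)` off-diagonal pairs at most the largest
`‖⟪f n, f n'⟫‖²`, which gives the bound.
-/

open scoped InnerProductSpace

open Finset Matrix

namespace Matrix

variable {m n 𝕜 : Type*} [Fintype m] [Fintype n] [RCLike 𝕜]

theorem sum_sum_norm_sq_eq_re_trace_mul_conjTranspose (A : Matrix m n 𝕜) :
    ∑ i, ∑ j, ‖A i j‖ ^ 2 = RCLike.re (A * Aᴴ).trace := by
  simp only [trace, diag_apply, mul_apply, conjTranspose_apply, RCLike.star_def,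
    RCLike.mul_conj, map_sum]
  norm_cast

theorem sum_sum_norm_sq_conjTranspose_mul_self (A : Matrix m n 𝕜) :
    ∑ i, ∑ j, ‖(Aᴴ * A) i j‖ ^ 2 = ∑ i, ∑ j, ‖(A * Aᴴ) i j‖ ^ 2 := by
  simp only [sum_sum_norm_sq_eq_re_trace_mul_conjTranspose, conjTranspose_mul,
    conjTranspose_conjTranspose, Matrix.mul_assoc]
  rw [trace_mul_comm]
  simp only [Matrix.mul_assoc]

theorem norm_trace_sq_le_card_mul_sum_sum_norm_sq (B : Matrix n n 𝕜) :
    ‖B.trace‖ ^ 2 ≤ Fintype.card n * ∑ i, ∑ j, ‖B i j‖ ^ 2 :=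
  calc ‖B.trace‖ ^ 2 ≤ (∑ i, ‖B i i‖) ^ 2 := by
        gcongr; exact norm_sum_le _ _
    _ ≤ Fintype.card n * ∑ i, ‖B i i‖ ^ 2 := sq_sum_le_card_mul_sum_sq
    _ ≤ Fintype.card n * ∑ i, ∑ j, ‖B i j‖ ^ 2 := by
        gcongr with i
        exact single_le_sum (f := fun j => ‖B i j‖ ^ 2) (fun _ _ => by positivity) (mem_univ i)

end Matrix

theorem Finset.sum_sum_eq_sum_add_sum_offDiag {α M : Type*} [DecidableEq α] [AddCommMonoid M]
    (s : Finset α) (g : α → α → M) :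
    ∑ i ∈ s, ∑ j ∈ s, g i j = ∑ i ∈ s, g i i + ∑ p ∈ s.offDiag, g p.1 p.2 := by
  rw [← sum_product' (f := g), ← diag_union_offDiag, sum_union (disjoint_diag_offDiag s),
    sum_diag]

section InnerProductSpace

variable {ι 𝕜 E : Type*} [Fintype ι] [RCLike 𝕜] [NormedAddCommGroup E] [InnerProductSpace 𝕜 E]

theorem Matrix.trace_gram (f : ι → E) : (gram 𝕜 f).trace = ∑ n, ((‖f n‖ ^ 2 : ℝ) : 𝕜) := by
  simp [trace, inner_self_eq_norm_sq_to_K]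

variable [FiniteDimensional 𝕜 E]

variable (𝕜) in
theorem sq_sum_norm_sq_le_finrank_mul_sum_sum_norm_inner_sq (f : ι → E) :
    (∑ n, ‖f n‖ ^ 2) ^ 2 ≤ Module.finrank 𝕜 E * ∑ n, ∑ n', ‖⟪f n, f n'⟫_𝕜‖ ^ 2 := by
  set A := of fun i n => (stdOrthonormalBasis 𝕜 E).repr (f n) i
  have hA : gram 𝕜 f = Aᴴ * A := gram_eq_conjTranspose_mul _ f
  calc (∑ n, ‖f n‖ ^ 2) ^ 2 = ‖(A * Aᴴ).trace‖ ^ 2 := by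
        rw [trace_mul_comm, ← hA, trace_gram, ← RCLike.ofReal_sum, RCLike.norm_ofReal,
          abs_of_nonneg (by positivity)]
    _ ≤ Module.finrank 𝕜 E * ∑ i, ∑ j, ‖(A * Aᴴ) i j‖ ^ 2 := by
        simpa using norm_trace_sq_le_card_mul_sum_sum_norm_sq (A * Aᴴ)
    _ = Module.finrank 𝕜 E * ∑ n, ∑ n', ‖⟪f n, f n'⟫_𝕜‖ ^ 2 := by
        rw [← sum_sum_norm_sq_conjTranspose_mul_self, ← hA]
        rfl

variable (𝕜) in
theorem exists_ne_welch_bound_le_norm_inner_sq [Nontrivial ι] {f : ι → E}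
    (hf : ∀ n, ‖f n‖ = 1) :
    ∃ n n', n ≠ n' ∧ ((Fintype.card ι : ℝ) - Module.finrank 𝕜 E) /
      (Module.finrank 𝕜 E * ((Fintype.card ι : ℝ) - 1)) ≤ ‖⟪f n, f n'⟫_𝕜‖ ^ 2 := by
  classical
  set N : ℝ := (Fintype.card ι : ℝ)
  set M : ℝ := (Module.finrank 𝕜 E : ℝ)
  obtain ⟨a, b, hab⟩ := exists_pair_ne ι
  obtain ⟨p, hp, hmax⟩ := (univ.offDiag : Finset (ι × ι)).exists_max_image
    (fun q => ‖⟪f q.1, f q.2⟫_𝕜‖ ^ 2) ⟨(a, b), by simpa⟩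
  refine ⟨p.1, p.2, (mem_offDiag.1 hp).2.2, ?_⟩
  set μ := ‖⟪f p.1, f p.2⟫_𝕜‖ ^ 2
  have hframe : N ^ 2 ≤ M * (N + ∑ q ∈ univ.offDiag, ‖⟪f q.1, f q.2⟫_𝕜‖ ^ 2) := by
    simpa [hf, sum_sum_eq_sum_add_sum_offDiag, inner_self_eq_norm_sq_to_K] using
      sq_sum_norm_sq_le_finrank_mul_sum_sum_norm_inner_sq 𝕜 f
  have hoff : ∑ q ∈ univ.offDiag, ‖⟪f q.1, f q.2⟫_𝕜‖ ^ 2 ≤ N * (N - 1) * μ := by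
    refine (sum_le_card_nsmul _ _ _ hmax).trans_eq ?_
    rw [offDiag_card, card_univ, nsmul_eq_mul, Nat.cast_sub (Nat.le_mul_self _)]
    push_cast
    ring
  rcases (show 0 ≤ M by positivity).eq_or_lt with hM | hM
  · rw [← hM, zero_mul, div_zero]
    positivity
  have hN : 1 < N := Nat.one_lt_cast.2 Fintype.one_lt_card
  rw [div_le_iff₀ (by positivity)]
  nlinarith

end InnerProductSpace

theorem stmt_1_general (M N : ℕ) (hN : 1 < N)
    (f : Fin N → EuclideanSpace ℂ (Fin M)) (hf : ∀ n, ‖f n‖ = 1) :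
    ∃ n n' : Fin N, n ≠ n' ∧
      Real.sqrt (((N : ℝ) - M) / (M * ((N : ℝ) - 1))) ≤ ‖⟪f n, f n'⟫_ℂ‖ := by
  have : Nontrivial (Fin N) := Fin.nontrivial_iff_two_le.2 hN
  obtain ⟨n, n', hne, hle⟩ := exists_ne_welch_bound_le_norm_inner_sq ℂ hf
  refine ⟨n, n', hne, ?_⟩
  rw [← Real.sqrt_sq (norm_nonneg ⟪f n, f n'⟫_ℂ)]
  simpa only [Fintype.card_fin, finrank_euclideanSpace_fin] using Real.sqrt_le_sqrt hle

/-- Welch bound: for unit-norm vectors f₁,…,f_N in ℂ^M with N ≥ M ≥ 1 and N > 1,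
the worst-case coherence max_{n ≠ n'} |⟨f_n, f_{n'}⟩| is at least √((N-M)/(M(N-1))). -/
theorem stmt_1 (M N : ℕ) (hM : 1 ≤ M) (hMN : M ≤ N) (hN : 1 < N)
    (f : Fin N → EuclideanSpace ℂ (Fin M)) (hf : ∀ n, ‖f n‖ = 1) :
    ∃ n n' : Fin N, n ≠ n' ∧
      Real.sqrt (((N : ℝ) - M) / (M * ((N : ℝ) - 1))) ≤ ‖⟪f n, f n'⟫_ℂ‖ :=
  stmt_1_general M N hN f hf
end

section
/- If F_K is an M×K matrix with unit-norm columns forming a subcollection of an equiangular tight frame (so |⟨f_k, f_{k'}⟩|² = (N−M)/(M(N−1)) for all k ≠ k'), then the maximum over eigenvalues λ of F_K F_K* of |（M/K)λ − 1|² is at most M(M−1)(N−K)/(K(N−1)). -/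
/-!
The eigenvalues `λᵢ` of `F_K F_K*` have first two moments fixed by the Gram matrix `F_K* F_K`:
`∑ λᵢ = tr (F_K* F_K) = K` by the unit-norm columns, and
`∑ λᵢ² = ‖F_K* F_K‖²_F = K + K (K - 1) μ²` by equiangularity. Expanding the square, these give
`∑ᵢ ((M/K) λᵢ - 1)² = M (M - 1) (N - K) / (K (N - 1))` exactly, and each term is at most the sum.
-/

open Matrix

theorem Finset.sum_sum_eq_of_diag_of_offDiag {ι R : Type*} [Fintype ι] [CommRing R]
    (f : ι → ι → R) (a b : R) (hdiag : ∀ i, f i i = a) (hoff : ∀ i j, i ≠ j → f i j = b) :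
    ∑ i, ∑ j, f i j = Fintype.card ι * (Fintype.card ι * b + (a - b)) := by
  classical
  have hf : ∀ i j, f i j = b + if i = j then a - b else 0 := fun i j => by
    split_ifs with h
    · rw [h, hdiag]; ring
    · rw [hoff i j h, add_zero]
  simp [hf, Finset.sum_add_distrib, Finset.card_univ, mul_add]

namespace Matrix

variable {𝕜 : Type*} [RCLike 𝕜]

theorem IsHermitian.trace_pow_eq_sum_eigenvalues_pow {n : Type*} [Fintype n] [DecidableEq n]
    {A : Matrix n n 𝕜} (hA : A.IsHermitian) (k : ℕ) :
    (A ^ k).trace = ∑ i, (hA.eigenvalues i : 𝕜) ^ k := by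
  conv_lhs => rw [hA.spectral_theorem, ← map_pow, Unitary.conjStarAlgAut_apply, trace_mul_cycle,
    Unitary.coe_star_mul_self, one_mul, diagonal_pow, trace_diagonal]
  simp

variable {m n : Type*} [Fintype m] [Fintype n] [DecidableEq m]

theorem trace_mul_conjTranspose_self_sq (F : Matrix m n 𝕜) :
    ((F * Fᴴ) ^ 2).trace = ∑ k, ∑ k', ((‖(Fᴴ * F) k k'‖ ^ 2 : ℝ) : 𝕜) := by
  have hG := isHermitian_conjTranspose_mul_self F
  rw [sq, show F * Fᴴ * (F * Fᴴ) = F * (Fᴴ * F * Fᴴ) by simp only [Matrix.mul_assoc],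
    trace_mul_comm, Matrix.mul_assoc, trace]
  refine Finset.sum_congr rfl fun k _ => Finset.sum_congr rfl fun k' _ => ?_
  change (Fᴴ * F) k k' * (Fᴴ * F) k' k = _
  rw [← hG.apply k' k, RCLike.ofReal_pow, ← RCLike.mul_conj, RCLike.star_def]

theorem sum_eigenvalues_mul_conjTranspose_self (F : Matrix m n 𝕜)
    (hdiag : ∀ k, (Fᴴ * F) k k = 1) :
    ∑ i, (isHermitian_mul_conjTranspose_self F).eigenvalues i = Fintype.card n := by
  apply RCLike.ofReal_injective (K := 𝕜)
  push_cast
  rw [← IsHermitian.trace_eq_sum_eigenvalues, trace_mul_comm, trace]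
  simp [hdiag]

theorem sum_eigenvalues_sq_mul_conjTranspose_self (F : Matrix m n 𝕜) (c : ℝ)
    (hdiag : ∀ k, (Fᴴ * F) k k = 1) (hoff : ∀ k k', k ≠ k' → ‖(Fᴴ * F) k k'‖ ^ 2 = c) :
    ∑ i, (isHermitian_mul_conjTranspose_self F).eigenvalues i ^ 2
      = Fintype.card n * (Fintype.card n * c + (1 - c)) := by
  apply RCLike.ofReal_injective (K := 𝕜)
  push_cast
  rw [← IsHermitian.trace_pow_eq_sum_eigenvalues_pow, trace_mul_conjTranspose_self_sq]
  refine Finset.sum_sum_eq_of_diag_of_offDiag _ _ _ (fun k => ?_) fun k k' h => ?_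
  · simp [hdiag]
  · rw [hoff k k' h]

end Matrix

theorem sum_sq_div_mul_sub_one_eq {ι : Type*} [Fintype ι] (x : ι → ℝ) {M N K c : ℝ}
    (hM : Fintype.card ι = M) (hM0 : M ≠ 0) (hK0 : K ≠ 0) (hN1 : N - 1 ≠ 0)
    (hc : c = (N - M) / (M * (N - 1))) (hsum : ∑ i, x i = K)
    (hsum_sq : ∑ i, x i ^ 2 = K * (K * c + (1 - c))) :
    ∑ i, (M / K * x i - 1) ^ 2 = M * (M - 1) * (N - K) / (K * (N - 1)) := by
  have hexpand : ∀ i, (M / K * x i - 1) ^ 2 = (M / K) ^ 2 * x i ^ 2 - 2 * (M / K) * x i + 1 :=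
    fun i => by ring
  simp only [hexpand, Finset.sum_add_distrib, Finset.sum_sub_distrib, ← Finset.mul_sum, hsum,
    hsum_sq, Finset.sum_const, Finset.card_univ, hM, nsmul_eq_mul, mul_one, hc]
  field_simp
  ring

theorem stmt_3_general (M N K : ℕ) (hN : 1 < N) (hK : 1 ≤ K)
    (FK : Matrix (Fin M) (Fin K) ℂ)
    (hcols : ∀ k : Fin K, ∑ m : Fin M, (starRingEnd ℂ) (FK m k) * FK m k = 1)
    (hang : ∀ k k' : Fin K, k ≠ k' →
      ‖∑ m : Fin M, (starRingEnd ℂ) (FK m k) * FK m k'‖ ^ 2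
        = ((N : ℝ) - M) / (M * ((N : ℝ) - 1))) :
    ∀ i : Fin M,
      |(M : ℝ) / K * (Matrix.isHermitian_mul_conjTranspose_self FK).eigenvalues i - 1| ^ 2
        ≤ (M : ℝ) * ((M : ℝ) - 1) * ((N : ℝ) - K) / (K * ((N : ℝ) - 1)) := by
  intro i
  have hM0 : (M : ℝ) ≠ 0 := Nat.cast_ne_zero.2 i.pos.ne'
  have hK0 : (K : ℝ) ≠ 0 := Nat.cast_ne_zero.2 (by omega)
  have hN1 : (N : ℝ) - 1 ≠ 0 := sub_ne_zero.2 (by exact_mod_cast hN.ne')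
  have hdiag : ∀ k, (FKᴴ * FK) k k = 1 := fun k => by simpa [mul_apply] using hcols k
  have hoff : ∀ k k', k ≠ k' → ‖(FKᴴ * FK) k k'‖ ^ 2 = ((N : ℝ) - M) / (M * ((N : ℝ) - 1)) :=
    fun k k' h => by simpa [mul_apply] using hang k k' h
  rw [sq_abs]
  calc _ ≤ ∑ j, ((M : ℝ) / K * (isHermitian_mul_conjTranspose_self FK).eigenvalues j - 1) ^ 2 :=
        Finset.single_le_sum (fun j _ => sq_nonneg _) (Finset.mem_univ i)
    _ = _ := by
      refine sum_sq_div_mul_sub_one_eq _ (by simp) hM0 hK0 hN1 rfl ?_ ?_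
      · simpa using sum_eigenvalues_mul_conjTranspose_self FK hdiag
      · simpa using sum_eigenvalues_sq_mul_conjTranspose_self FK _ hdiag hoff

/-- If F_K is an M×K matrix with unit-norm columns coming from an M×N equiangular tight
frame (so |⟨f_k, f_{k'}⟩|² = (N−M)/(M(N−1)) for all k ≠ k'), then each eigenvalue λ
of F_K F_K* satisfies |(M/K)λ − 1|² ≤ M(M−1)(N−K)/(K(N−1)). -/
theorem stmt_3 (M N K : ℕ) (hM : 1 ≤ M) (hN : 1 < N) (hK : 1 ≤ K) (hKN : K ≤ N)
    (FK : Matrix (Fin M) (Fin K) ℂ)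
    (hcols : ∀ k : Fin K, ∑ m : Fin M, (starRingEnd ℂ) (FK m k) * FK m k = 1)
    (hang : ∀ k k' : Fin K, k ≠ k' →
      ‖∑ m : Fin M, (starRingEnd ℂ) (FK m k) * FK m k'‖ ^ 2
        = ((N : ℝ) - M) / (M * ((N : ℝ) - 1))) :
    ∀ i : Fin M,
      |(M : ℝ) / K * (Matrix.isHermitian_mul_conjTranspose_self FK).eigenvalues i - 1| ^ 2
        ≤ (M : ℝ) * ((M : ℝ) - 1) * ((N : ℝ) - K) / (K * ((N : ℝ) - 1)) :=
  stmt_3_general M N K hN hK FK hcols hang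
end

section
/- Let y ∈ C^{M+1} be a nonzero vector orthogonal to the all-ones vector, with M ≥ 1. If z ∈ C^{M+1} is orthogonal to the all-ones vector and satisfies ⟨z, Py⟩ = 0 for every (M+1)×(M+1) permutation matrix P, then z = 0. -/
/-!
Transposing two coordinates `a, b` changes `∑ i, conj (z i) * y (σ i)` by
`(conj (z a) - conj (z b)) * (y (σ a) - y (σ b))`. Since `y` is nonzero with zero sum it is not
constant, so choosing `σ` to send `a, b` to coordinates where `y` differs forces `z a = z b`.
Hence `z` is constant, and zero sum makes it zero.
-/

theorem Equiv.Perm.exists_apply_eq_and_apply_eq {α : Type*} {a b p q : α}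
    (hab : a ≠ b) (hpq : p ≠ q) : ∃ σ : Equiv.Perm α, σ a = p ∧ σ b = q := by
  obtain ⟨σ, hσ⟩ := Equiv.Perm.exists_extending_pair ![a, b] ![p, q]
    (by simp [Function.Injective, Fin.forall_fin_two, hab, hab.symm])
    (by simp [Function.Injective, Fin.forall_fin_two, hpq, hpq.symm])
  exact ⟨σ, hσ 0, hσ 1⟩

theorem Function.eq_zero_of_forall_eq_of_sum_eq_zero {ι M : Type*} [Fintype ι]
    [AddCommMonoid M] [IsAddTorsionFree M] {z : ι → M} (hconst : ∀ i j, z i = z j)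
    (hsum : ∑ i, z i = 0) : z = 0 := by
  funext i
  have : Nonempty ι := ⟨i⟩
  have hcard : Fintype.card ι • z i = 0 := by
    rw [← hsum, ← Finset.card_univ, ← Finset.sum_const]
    exact Finset.sum_congr rfl fun j _ => hconst i j
  exact (nsmul_eq_zero_iff.mp hcard).resolve_right Fintype.card_ne_zero

section Swap

variable {ι R : Type*} [Fintype ι] [DecidableEq ι] [CommRing R]

theorem sum_mul_sub_sum_mul_swap (f g : ι → R) (a b : ι) :
    ∑ i, f i * g i - ∑ i, f i * g (Equiv.swap a b i) = (f a - f b) * (g a - g b) := by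
  rcases eq_or_ne a b with rfl | hab
  · simp
  rw [← Finset.sum_sub_distrib, Fintype.sum_eq_add a b hab]
  · simp only [Equiv.swap_apply_left, Equiv.swap_apply_right]
    ring
  · rintro i ⟨hia, hib⟩
    rw [Equiv.swap_apply_of_ne_of_ne hia hib, sub_self]

theorem eq_of_forall_perm_sum_mul_eq_zero [NoZeroDivisors R] {f y : ι → R}
    (horth : ∀ σ : Equiv.Perm ι, ∑ i, f i * y (σ i) = 0) {p q : ι} (hpq : y p ≠ y q)
    (a b : ι) : f a = f b := by
  rcases eq_or_ne a b with rfl | hab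
  · rfl
  obtain ⟨σ, hσa, hσb⟩ :=
    Equiv.Perm.exists_apply_eq_and_apply_eq hab (ne_of_apply_ne y hpq)
  have hprod : (f a - f b) * (y p - y q) = 0 := by
    rw [← hσa, ← hσb]
    have hswap := sum_mul_sub_sum_mul_swap f (y ∘ σ) a b
    simp only [Function.comp_apply] at hswap
    rw [← hswap, horth σ, zero_sub, neg_eq_zero]
    exact horth (σ * Equiv.swap a b)
  exact sub_eq_zero.mp ((mul_eq_zero.mp hprod).resolve_right (sub_ne_zero.mpr hpq))

end Swap

theorem stmt_9_general (M : ℕ) (y z : Fin (M + 1) → ℂ)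
    (hy0 : y ≠ 0) (hy : ∑ i, y i = 0) (hz : ∑ i, z i = 0)
    (horth : ∀ σ : Equiv.Perm (Fin (M + 1)),
      ∑ i, (starRingEnd ℂ) (z i) * y (σ i) = 0) :
    z = 0 := by
  obtain ⟨p, q, hpq⟩ : ∃ p q, y p ≠ y q := by
    by_contra! hconst
    exact hy0 (Function.eq_zero_of_forall_eq_of_sum_eq_zero hconst hy)
  refine Function.eq_zero_of_forall_eq_of_sum_eq_zero (fun a b => ?_) hz
  exact (starRingEnd ℂ).injective
    (eq_of_forall_perm_sum_mul_eq_zero (f := fun i => starRingEnd ℂ (z i)) horth hpq a b)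

/-- Let y ∈ ℂ^{M+1} be nonzero and orthogonal to the all-ones vector, M ≥ 1.
If z ∈ ℂ^{M+1} is orthogonal to the all-ones vector and ⟨z, Py⟩ = 0 for every
permutation P of coordinates, then z = 0. -/
theorem stmt_9 (M : ℕ) (hM : 1 ≤ M) (y z : Fin (M + 1) → ℂ)
    (hy0 : y ≠ 0) (hy : ∑ i, y i = 0) (hz : ∑ i, z i = 0)
    (horth : ∀ σ : Equiv.Perm (Fin (M + 1)),
      ∑ i, (starRingEnd ℂ) (z i) * y (σ i) = 0) :
    z = 0 :=
  stmt_9_general M y z hy0 hy hz horth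
end

section
/- Fix C > 0 and let θ_M ∈ (0, π/2) satisfy cos²θ_M = C²/M (for M > C²). Then the ratio (∫_0^{θ_M} sin^{M−2}φ dφ) / (∫_0^{π/2} sin^{M−2}φ dφ) converges, as M → ∞, to 2Q(C) = 2·(1/√(2π))∫_C^∞ e^{−u²/2} du. -/
/-!
Substituting `u = √M cos φ` turns `sin^{M-2} φ dφ` into `M^{-1/2} (1 - u²/M)^{(M-3)/2} du`, so both
integrals become tail integrals `∫_{a}^∞` of the profile `(1 - u²/M)₊^{(M-3)/2}`, with `a = C` for
the numerator and `a = 0` for the denominator; the factor `M^{-1/2}` cancels. The profile tends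
pointwise to `e^{-u²/2}` and is dominated by `e^{-u²/4}`, so by dominated convergence the ratio
tends to `∫_C^∞ e^{-u²/2} du / ∫_0^∞ e^{-u²/2} du = 2 Q(C)`.
-/

open Real Filter MeasureTheory Set Topology

/-- Up to normalisation, the density of `√M x₁` for `x` uniform on the sphere `S^{M-1}`. -/
noncomputable def sphereProfile (M : ℕ) (u : ℝ) : ℝ :=
  max (1 - u ^ 2 / M) 0 ^ (((M : ℝ) - 3) / 2)

namespace sphereProfile

variable {M : ℕ}

lemma nonneg (M : ℕ) (u : ℝ) : 0 ≤ sphereProfile M u :=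
  rpow_nonneg (le_max_right _ _) _

lemma continuous (hM : 3 ≤ M) : Continuous (sphereProfile M) := by
  have : (3 : ℝ) ≤ M := by exact_mod_cast hM
  exact Continuous.rpow_const (by fun_prop) fun _ => Or.inr (by linarith)

lemma eq_zero_of_le_sq (hM : 4 ≤ M) {u : ℝ} (hu : (M : ℝ) ≤ u ^ 2) : sphereProfile M u = 0 := by
  have hM4 : (4 : ℝ) ≤ M := by exact_mod_cast hM
  have hbase : max (1 - u ^ 2 / M) 0 = 0 :=
    max_eq_right (sub_nonpos.mpr ((one_le_div (by linarith)).mpr hu))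
  rw [sphereProfile, hbase, zero_rpow (by linarith)]

lemma eq_zero_of_sqrt_lt (hM : 4 ≤ M) {u : ℝ} (hu : √M < |u|) : sphereProfile M u = 0 :=
  eq_zero_of_le_sq hM <| by
    simpa [sq_abs, sq_sqrt (Nat.cast_nonneg M)] using pow_le_pow_left₀ (sqrt_nonneg _) hu.le 2

lemma hasCompactSupport (hM : 4 ≤ M) : HasCompactSupport (sphereProfile M) :=
  HasCompactSupport.intro (isCompact_Icc (a := -√M) (b := √M)) fun u hu =>
    eq_zero_of_sqrt_lt hM (by rw [mem_Icc, ← abs_le] at hu; exact not_le.mp hu)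

lemma integrable (hM : 4 ≤ M) : Integrable (sphereProfile M) :=
  (continuous (by omega)).integrable_of_hasCompactSupport (hasCompactSupport hM)

lemma tendsto_exp (u : ℝ) :
    Tendsto (fun M : ℕ => sphereProfile M u) atTop (𝓝 (exp (-u ^ 2 / 2))) := by
  have hlog : Tendsto (fun M : ℕ => (M : ℝ) * log (1 + -u ^ 2 / M)) atTop (𝓝 (-u ^ 2)) :=
    (tendsto_mul_log_one_add_div_atTop _).comp tendsto_natCast_atTop_atTop
  have hratio : Tendsto (fun M : ℕ => (1 - 3 / (M : ℝ)) / 2) atTop (𝓝 ((1 - 0) / 2)) :=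
    (tendsto_const_nhds.sub (tendsto_const_div_atTop_nhds_zero_nat 3)).div_const 2
  have hexp := (continuous_exp.tendsto _).comp (hratio.mul hlog)
  rw [show (1 - 0) / 2 * -u ^ 2 = -u ^ 2 / 2 by ring] at hexp
  refine hexp.congr' ?_
  filter_upwards [eventually_gt_atTop ⌈u ^ 2⌉₊] with M hM
  have hu : u ^ 2 < M := (Nat.le_ceil _).trans_lt (by exact_mod_cast hM)
  have hM0 : (0 : ℝ) < M := (sq_nonneg u).trans_lt hu
  have hbase : 0 < 1 - u ^ 2 / M := sub_pos.mpr ((div_lt_one hM0).mpr hu)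
  rw [Function.comp_apply, sphereProfile, max_eq_left hbase.le, rpow_def_of_pos hbase,
    neg_div, ← sub_eq_add_neg]
  congr 1
  field_simp

lemma le_exp (hM : 6 ≤ M) (u : ℝ) : sphereProfile M u ≤ exp (-u ^ 2 / 4) := by
  have hM6 : (6 : ℝ) ≤ M := by exact_mod_cast hM
  have hbase : max (1 - u ^ 2 / M) 0 ≤ exp (-u ^ 2 / M) :=
    max_le (by linarith [add_one_le_exp (-u ^ 2 / M), neg_div (M : ℝ) (u ^ 2)]) (exp_pos _).le
  calc sphereProfile M u ≤ exp (-u ^ 2 / M) ^ (((M : ℝ) - 3) / 2) :=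
        rpow_le_rpow (le_max_right _ _) hbase (by linarith)
    _ = exp (-(u ^ 2 * (((M : ℝ) - 3) / (2 * M)))) := by
        rw [← exp_mul]; congr 1; field_simp
    _ ≤ exp (-(u ^ 2 * (1 / 4))) := by
        refine exp_le_exp.mpr (neg_le_neg (mul_le_mul_of_nonneg_left ?_ (sq_nonneg u)))
        rw [div_le_div_iff₀ (by norm_num) (by positivity)]
        linarith
    _ = exp (-u ^ 2 / 4) := by ring_nf

lemma tendsto_integral_Ioi (a : ℝ) :
    Tendsto (fun M : ℕ => ∫ u in Ioi a, sphereProfile M u) atTop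
      (𝓝 (∫ u in Ioi a, exp (-u ^ 2 / 2))) := by
  have hdom : Integrable fun u : ℝ => exp (-u ^ 2 / 4) := by
    simpa [neg_div, div_eq_inv_mul] using integrable_exp_neg_mul_sq (b := 1 / 4) (by norm_num)
  refine tendsto_integral_filter_of_dominated_convergence _ ?_ ?_ hdom.integrableOn
    (ae_of_all _ tendsto_exp)
  · filter_upwards [eventually_ge_atTop 3] with M hM
    exact (continuous hM).aestronglyMeasurable
  · filter_upwards [eventually_ge_atTop 6] with M hM
    exact ae_of_all _ fun u => by
      rw [norm_of_nonneg (nonneg M u)]; exact le_exp hM u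

lemma intervalIntegral_eq_integral_Ioi (hM : 4 ≤ M) {a : ℝ} (ha : a ≤ √M) :
    ∫ u in a..√M, sphereProfile M u = ∫ u in Ioi a, sphereProfile M u := by
  have htail : ∫ u in Ioi √M, sphereProfile M u = 0 :=
    setIntegral_eq_zero_of_forall_eq_zero fun u hu =>
      eq_zero_of_sqrt_lt hM (lt_of_lt_of_le hu (le_abs_self u))
  rw [intervalIntegral.integral_of_le ha, ← Ioc_union_Ioi_eq_Ioi ha,
    setIntegral_union (Ioc_disjoint_Ioi le_rfl) measurableSet_Ioi
      (integrable hM).integrableOn (integrable hM).integrableOn, htail, add_zero]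

lemma comp_sqrt_mul_cos (hM : 3 ≤ M) {φ : ℝ} (hφ : 0 ≤ sin φ) :
    sphereProfile M (√M * cos φ) = sin φ ^ (M - 3) := by
  have hM0 : (0 : ℝ) < M := by positivity
  have hbase : 1 - (√M * cos φ) ^ 2 / M = sin φ ^ 2 := by
    rw [mul_pow, sq_sqrt hM0.le, mul_div_cancel_left₀ _ hM0.ne', ← sin_sq_add_cos_sq φ]
    ring
  have hexp : (2 : ℝ) * (((M : ℝ) - 3) / 2) = ((M - 3 : ℕ) : ℝ) := by
    push_cast [Nat.cast_sub hM]; ring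
  rw [sphereProfile, hbase, max_eq_left (sq_nonneg _), ← rpow_natCast (sin φ) 2,
    ← rpow_mul hφ, Nat.cast_ofNat, hexp, rpow_natCast]

end sphereProfile

open sphereProfile in
theorem integral_sin_pow_eq_integral_Ioi_sphereProfile {M : ℕ} (hM : 4 ≤ M) {θ : ℝ}
    (hθ₀ : 0 ≤ θ) (hθπ : θ ≤ π) :
    ∫ φ in (0 : ℝ)..θ, sin φ ^ (M - 2) = (√M)⁻¹ * ∫ u in Ioi (√M * cos θ), sphereProfile M u := by
  have hs : 0 < √M := sqrt_pos.mpr (by positivity)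
  have hsubst := intervalIntegral.integral_comp_mul_deriv (a := 0) (b := θ)
    (fun φ _ => (hasDerivAt_cos φ).const_mul √M)
    (continuous_const.mul continuous_sin.neg).continuousOn (continuous (M := M) (by omega))
  have hintegrand : EqOn (fun φ => (sphereProfile M ∘ fun φ => √M * cos φ) φ * (√M * -sin φ))
      (fun φ => -√M * sin φ ^ (M - 2)) (uIcc 0 θ) := by
    intro φ hφ
    rw [uIcc_of_le hθ₀] at hφ
    have hsin := sin_nonneg_of_nonneg_of_le_pi hφ.1 (hφ.2.trans hθπ)
    dsimp only [Function.comp_apply]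
    rw [comp_sqrt_mul_cos (by omega) hsin, show M - 2 = M - 3 + 1 by omega,
      pow_succ]
    ring
  rw [intervalIntegral.integral_congr hintegrand, intervalIntegral.integral_const_mul, cos_zero,
    mul_one] at hsubst
  rw [← intervalIntegral_eq_integral_Ioi hM (mul_le_of_le_one_right hs.le (cos_le_one θ)),
    intervalIntegral.integral_symm √M, ← hsubst, neg_mul, neg_neg, inv_mul_cancel_left₀ hs.ne']

theorem integral_Ioi_zero_exp_neg_sq_div_two :
    ∫ u in Ioi (0 : ℝ), exp (-u ^ 2 / 2) = √(2 * π) / 2 := by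
  have h := integral_gaussian_Ioi (1 / 2)
  rw [show π / (1 / 2) = 2 * π by ring] at h
  rw [← h]
  congr with u
  ring_nf

/-- Fix C > 0 and let θ_M ∈ (0, π/2) satisfy cos θ_M = C/√M (for M > C²). Then
(∫_0^{θ_M} sin^{M−2}φ dφ) / (∫_0^{π/2} sin^{M−2}φ dφ) → 2Q(C) as M → ∞, where
Q(C) = (1/√(2π)) ∫_C^∞ e^{−u²/2} du. -/
theorem stmt_12 (C : ℝ) (hC : 0 < C) :
    Tendsto (fun M : ℕ =>
      (∫ φ in (0 : ℝ)..(Real.arccos (C / Real.sqrt M)), Real.sin φ ^ (M - 2)) /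
      (∫ φ in (0 : ℝ)..(Real.pi / 2), Real.sin φ ^ (M - 2)))
      atTop
      (nhds (2 * ((1 / Real.sqrt (2 * Real.pi)) *
        ∫ u in Set.Ioi C, Real.exp (-u ^ 2 / 2)))) := by
  have hlim := (sphereProfile.tendsto_integral_Ioi C).div (sphereProfile.tendsto_integral_Ioi 0)
    (by rw [integral_Ioi_zero_exp_neg_sq_div_two]; positivity)
  rw [show ∀ x : ℝ, 2 * (1 / √(2 * π) * x) = x / (√(2 * π) / 2) from fun x => by field_simp,
    ← integral_Ioi_zero_exp_neg_sq_div_two]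
  refine hlim.congr' ?_
  filter_upwards [eventually_ge_atTop 4, eventually_gt_atTop ⌈C ^ 2⌉₊] with M hM hMC
  have hs : 0 < √M := sqrt_pos.mpr (by positivity)
  have hCM : C / √M ≤ 1 :=
    (div_le_one hs).mpr (le_sqrt_of_sq_le ((Nat.le_ceil _).trans (by exact_mod_cast hMC.le)))
  have hcos : √M * cos (arccos (C / √M)) = C := by
    rw [cos_arccos (by linarith [div_pos hC hs]) hCM, mul_div_cancel₀ _ hs.ne']
  rw [Pi.div_apply, integral_sin_pow_eq_integral_Ioi_sphereProfile hM (arccos_nonneg _) (arccos_le_pi _), hcos,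
    integral_sin_pow_eq_integral_Ioi_sphereProfile hM (by positivity) (by linarith [pi_pos]),
    cos_pi_div_two, mul_zero, mul_div_mul_left _ _ (inv_ne_zero hs.ne')]
end
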